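/- Let n ∈ ℕ, let R_n be a Hammersley type point set (for an arbitrary fixed choice function σ), let P be the Davenport-type symmetrized multiset consisting of the points (x,y) and (x,1−y) for (x,y) ∈ R_n (so P has 2^{n+1} points counted with multiplicity), and let D be the local discrepancy of P. Then ∫_0^1 ∫_0^1 D(t1,t2) dt1 dt2 = 2^{−(n+2)}. -/

import Mathlib

open MeasureTheory Set

/-- The L∞-normalized Haar function `h_{j,m}` on `[0,1)`: it is `+1` on the left half
`[2m/2^{j+1}, (2m+1)/2^{j+1})` of the dyadic interval `I_{j,m}`, `-1` on the right half
`[(2m+1)/2^{j+1}, (2m+2)/2^{j+1})`, and `0` elsewhere. -/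
noncomputable def haar (j m : ℕ) (t : ℝ) : ℝ :=
  if (2 * m : ℝ) / 2 ^ (j + 1) ≤ t ∧ t < (2 * m + 1 : ℝ) / 2 ^ (j + 1) then 1
  else if (2 * m + 1 : ℝ) / 2 ^ (j + 1) ≤ t ∧ t < (2 * m + 2 : ℝ) / 2 ^ (j + 1) then -1
  else 0

/-- First coordinate of a point of the Hammersley type point set:
`t_n/2 + t_{n-1}/2^2 + ⋯ + t_1/2^n`, where the index `i : Fin n` corresponds to `t_{i+1}`,
so the digit `t i` gets divided by `2^{n - i}`. -/
noncomputable def hamX (n : ℕ) (t : Fin n → Bool) : ℝ :=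
  ∑ i : Fin n, (if t i then (1 : ℝ) else 0) / 2 ^ (n - i.val)

/-- Second coordinate of a point of the Hammersley type point set:
`s_1/2 + s_2/2^2 + ⋯ + s_n/2^n` with `s_i = t_i` if `σ i = false` and `s_i = 1 - t_i`
if `σ i = true`, i.e. `s_i = t_i XOR σ i`. -/
noncomputable def hamY (n : ℕ) (σ : Fin n → Bool) (t : Fin n → Bool) : ℝ :=
  ∑ i : Fin n, (if (t i).xor (σ i) then (1 : ℝ) else 0) / 2 ^ (i.val + 1)

/-- The points of the symmetrized Hammersley type multiset `R̃_n`, parametrized by a digit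
vector `t` and two reflection bits: `(x,y)`, `(x,1-y)`, `(1-x,y)`, `(1-x,1-y)`. -/
noncomputable def symPoint (n : ℕ) (σ : Fin n → Bool) (z : (Fin n → Bool) × Bool × Bool) :
    ℝ × ℝ :=
  (if z.2.1 then 1 - hamX n z.1 else hamX n z.1,
   if z.2.2 then 1 - hamY n σ z.1 else hamY n σ z.1)

/-- The local discrepancy function of the symmetrized Hammersley type multiset `R̃_n`
with `N = 2^{n+2}` points counted with multiplicity. -/
noncomputable def discSym (n : ℕ) (σ : Fin n → Bool) (t1 t2 : ℝ) : ℝ :=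
  (∑ z : (Fin n → Bool) × Bool × Bool,
      if (symPoint n σ z).1 < t1 ∧ (symPoint n σ z).2 < t2 then (1 : ℝ) else 0) / 2 ^ (n + 2)
    - t1 * t2

/-- The points of the Davenport-type symmetrized multiset `R_n ∪ R_{n,1}`, parametrized by a
digit vector `t` and one reflection bit: `(x,y)` and `(x,1-y)`. -/
noncomputable def davPoint (n : ℕ) (σ : Fin n → Bool) (z : (Fin n → Bool) × Bool) : ℝ × ℝ :=
  (hamX n z.1, if z.2 then 1 - hamY n σ z.1 else hamY n σ z.1)

/-- The local discrepancy function of the Davenport-type symmetrized multiset with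
`2^{n+1}` points counted with multiplicity. -/
noncomputable def discDav (n : ℕ) (σ : Fin n → Bool) (t1 t2 : ℝ) : ℝ :=
  (∑ z : (Fin n → Bool) × Bool,
      if (davPoint n σ z).1 < t1 ∧ (davPoint n σ z).2 < t2 then (1 : ℝ) else 0) / 2 ^ (n + 1)
    - t1 * t2

/-!
For points `p i = (x_i, y_i)` in the unit square, `∫₀¹∫₀¹ 1{x < t₁, y < t₂} = (1 - x)(1 - y)`
and `∫₀¹∫₀¹ t₁t₂ = 1/4`, so the integral of the local discrepancy is
`(1/N) ∑ᵢ (1 - xᵢ)(1 - yᵢ) - 1/4`. In the Davenport set the two points `(x, y)` and `(x, 1 - y)`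
together contribute `1 - x`, and flipping all digits maps `hamX t` to `1 - 2⁻ⁿ - hamX t`, so the
`x`-coordinates of `R_n` sum to `(2ⁿ - 1)/2`. Hence the integral is
`(2ⁿ - (2ⁿ - 1)/2) / 2ⁿ⁺¹ - 1/4 = 2^{-(n+2)}`.
-/

noncomputable def localDiscrepancy {ι : Type*} [Fintype ι] (p : ι → ℝ × ℝ) (N t1 t2 : ℝ) : ℝ :=
  (∑ i, if (p i).1 < t1 ∧ (p i).2 < t2 then (1 : ℝ) else 0) / N - t1 * t2

lemma ite_lt_eq_indicator (a c : ℝ) :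
    (fun t : ℝ => if a < t then c else 0) = (Ioi a).indicator (fun _ => c) := by
  ext t
  simp only [indicator, mem_Ioi]

lemma integrableOn_ite_lt (a c : ℝ) {s : Set ℝ} (hs : volume s ≠ ⊤) :
    IntegrableOn (fun t => if a < t then c else 0) s := by
  rw [ite_lt_eq_indicator]
  exact (integrableOn_const hs).indicator measurableSet_Ioi

lemma setIntegral_Ico_ite_lt {a : ℝ} (ha : a ∈ Icc (0 : ℝ) 1) :
    ∫ t in Ico (0 : ℝ) 1, (if a < t then (1 : ℝ) else 0) = 1 - a := by
  have hinter : Ico (0 : ℝ) 1 ∩ Ioi a = Ioo a 1 := by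
    ext t
    simp only [mem_inter_iff, mem_Ico, mem_Ioi, mem_Ioo]
    constructor
    · rintro ⟨⟨_, ht1⟩, hat⟩
      exact ⟨hat, ht1⟩
    · rintro ⟨hat, ht1⟩
      exact ⟨⟨ha.1.trans hat.le, ht1⟩, hat⟩
  rw [ite_lt_eq_indicator, setIntegral_indicator measurableSet_Ioi, hinter]
  simp [ha.2]

lemma setIntegral_Ico_id : ∫ t in Ico (0 : ℝ) 1, t = 1 / 2 := by
  rw [integral_Ico_eq_integral_Ioo, ← integral_Ioc_eq_integral_Ioo,
    ← intervalIntegral.integral_of_le zero_le_one]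
  norm_num

lemma setIntegral_Ico_sum_mul_ite_lt_sub {ι : Type*} [Fintype ι] (a c : ι → ℝ)
    (ha : ∀ i, a i ∈ Icc (0 : ℝ) 1) (N b : ℝ) :
    ∫ t in Ico (0 : ℝ) 1, ((∑ i, c i * if a i < t then (1 : ℝ) else 0) / N - b * t)
      = (∑ i, c i * (1 - a i)) / N - b / 2 := by
  have hfin : volume (Ico (0 : ℝ) 1) ≠ ⊤ := by simp
  have hstep : ∀ i, IntegrableOn (fun t => c i * if a i < t then (1 : ℝ) else 0) (Ico 0 1) :=
    fun i => (integrableOn_ite_lt (a i) 1 hfin).const_mul (c i)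
  rw [integral_sub ((integrable_finsetSum _ fun i _ => hstep i).div_const N)
      ((continuous_const_mul b).integrableOn_Icc.mono_set Ico_subset_Icc_self),
    integral_div, integral_finsetSum _ fun i _ => hstep i, integral_const_mul, setIntegral_Ico_id]
  simp_rw [integral_const_mul, setIntegral_Ico_ite_lt (ha _)]
  ring

theorem integral_integral_localDiscrepancy {ι : Type*} [Fintype ι] (p : ι → ℝ × ℝ)
    (hp : ∀ i, p i ∈ Icc (0 : ℝ) 1 ×ˢ Icc (0 : ℝ) 1) (N : ℝ) :
    ∫ t1 in Ico (0 : ℝ) 1, ∫ t2 in Ico (0 : ℝ) 1, localDiscrepancy p N t1 t2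
      = (∑ i, (1 - (p i).1) * (1 - (p i).2)) / N - 1 / 4 := by
  have hinner : ∀ t1, ∫ t2 in Ico (0 : ℝ) 1, localDiscrepancy p N t1 t2
        = (∑ i, (1 - (p i).2) * if (p i).1 < t1 then (1 : ℝ) else 0) / N - 1 / 2 * t1 := by
    intro t1
    have hsplit : ∀ i t2, (if (p i).1 < t1 ∧ (p i).2 < t2 then (1 : ℝ) else 0)
        = (if (p i).1 < t1 then 1 else 0) * if (p i).2 < t2 then 1 else 0 := fun i t2 => by
      rw [ite_zero_mul_ite_zero, one_mul]
    simp_rw [localDiscrepancy, hsplit]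
    rw [setIntegral_Ico_sum_mul_ite_lt_sub _ _ (fun i => (hp i).2)]
    simp_rw [mul_comm]
    ring
  simp_rw [hinner]
  rw [setIntegral_Ico_sum_mul_ite_lt_sub _ _ (fun i => (hp i).1)]
  simp_rw [mul_comm]
  ring

lemma sum_fin_one_div_two_pow_succ (n : ℕ) :
    ∑ i : Fin n, (1 : ℝ) / 2 ^ (i.val + 1) = 1 - 1 / 2 ^ n := by
  rw [Fin.sum_univ_eq_sum_range (fun i => (1 : ℝ) / 2 ^ (i + 1))]
  induction n with
  | zero => simp
  | succ n ih =>
    rw [Finset.sum_range_succ, ih]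
    field_simp
    ring

lemma hamX_add_hamX_not (n : ℕ) (t : Fin n → Bool) :
    hamX n t + hamX n (fun i => !t i) = 1 - 1 / 2 ^ n := by
  rw [← sum_fin_one_div_two_pow_succ, Fintype.sum_equiv Fin.revPerm
    (fun i : Fin n => (1 : ℝ) / 2 ^ (i.val + 1)) (fun i => (1 : ℝ) / 2 ^ (n - i.val))
    (fun i => by simp only [Fin.revPerm_apply, Fin.val_rev]; congr 2; omega),
    hamX, hamX, ← Finset.sum_add_distrib]
  refine Finset.sum_congr rfl fun i _ => ?_
  cases t i <;> simp

lemma hamY_add_hamY_not (n : ℕ) (σ t : Fin n → Bool) :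
    hamY n σ t + hamY n σ (fun i => !t i) = 1 - 1 / 2 ^ n := by
  rw [← sum_fin_one_div_two_pow_succ, hamY, hamY, ← Finset.sum_add_distrib]
  refine Finset.sum_congr rfl fun i _ => ?_
  cases t i <;> cases σ i <;> simp

lemma hamX_nonneg (n : ℕ) (t : Fin n → Bool) : 0 ≤ hamX n t :=
  Finset.sum_nonneg fun i _ => by split <;> positivity

lemma hamY_nonneg (n : ℕ) (σ t : Fin n → Bool) : 0 ≤ hamY n σ t :=
  Finset.sum_nonneg fun i _ => by split <;> positivity

lemma hamX_mem_Icc (n : ℕ) (t : Fin n → Bool) : hamX n t ∈ Icc (0 : ℝ) 1 := by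
  have hsum := hamX_add_hamX_not n t
  have hnot := hamX_nonneg n (fun i => !t i)
  exact ⟨hamX_nonneg n t, by linarith [one_div_pos.mpr (pow_pos (two_pos (α := ℝ)) n)]⟩

lemma hamY_mem_Icc (n : ℕ) (σ t : Fin n → Bool) : hamY n σ t ∈ Icc (0 : ℝ) 1 := by
  have hsum := hamY_add_hamY_not n σ t
  have hnot := hamY_nonneg n σ (fun i => !t i)
  exact ⟨hamY_nonneg n σ t, by linarith [one_div_pos.mpr (pow_pos (two_pos (α := ℝ)) n)]⟩

lemma sum_hamX (n : ℕ) : ∑ t : Fin n → Bool, hamX n t = (2 ^ n - 1) / 2 := by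
  have hnot : ∑ t : Fin n → Bool, hamX n (fun i => !t i) = ∑ t : Fin n → Bool, hamX n t :=
    Fintype.sum_equiv (Equiv.piCongrRight fun _ => Equiv.boolNot) _ _ fun _ => rfl
  have hpair := Finset.sum_congr rfl fun t (_ : t ∈ Finset.univ) => hamX_add_hamX_not n t
  rw [Finset.sum_add_distrib, hnot, Finset.sum_const, Finset.card_univ, Fintype.card_fun,
    Fintype.card_bool, Fintype.card_fin, nsmul_eq_mul] at hpair
  push_cast at hpair
  rw [mul_one_sub, mul_one_div_cancel (by positivity)] at hpair
  linarith

lemma davPoint_mem_Icc_prod (n : ℕ) (σ : Fin n → Bool) (z : (Fin n → Bool) × Bool) :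
    davPoint n σ z ∈ Icc (0 : ℝ) 1 ×ˢ Icc (0 : ℝ) 1 := by
  obtain ⟨hy0, hy1⟩ := hamY_mem_Icc n σ z.1
  refine ⟨hamX_mem_Icc n z.1, ?_⟩
  unfold davPoint
  split_ifs <;> constructor <;> linarith

/-- Remark: for the local discrepancy `D` of the Davenport-type symmetrized multiset
`R_n ∪ R_{n,1}` (with `2^{n+1}` points), `∫₀¹∫₀¹ D(t₁,t₂) dt₁ dt₂ = 2^{-(n+2)}`. -/
theorem dav_disc_integral (n : ℕ) (σ : Fin n → Bool) :
    (∫ t1 in Set.Ico (0 : ℝ) 1, ∫ t2 in Set.Ico (0 : ℝ) 1, discDav n σ t1 t2)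
      = 1 / 2 ^ (n + 2) := by
  have hreflect : ∀ t, ∑ b : Bool,
      (1 - (davPoint n σ (t, b)).1) * (1 - (davPoint n σ (t, b)).2) = 1 - hamX n t := by
    intro t
    simp only [Fintype.sum_bool, davPoint, if_true, Bool.false_eq_true, if_false]
    ring
  change ∫ t1 in Ico (0 : ℝ) 1, ∫ t2 in Ico (0 : ℝ) 1,
    localDiscrepancy (davPoint n σ) (2 ^ (n + 1)) t1 t2 = _
  rw [integral_integral_localDiscrepancy _ (davPoint_mem_Icc_prod n σ), Fintype.sum_prod_type,
    Finset.sum_congr rfl fun t _ => hreflect t, Finset.sum_sub_distrib, sum_hamX]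
  simp only [Finset.sum_const, Finset.card_univ, Fintype.card_fun, Fintype.card_bool,
    Fintype.card_fin, nsmul_eq_mul, Nat.cast_pow, Nat.cast_ofNat, mul_one]
  field_simp
  ring
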